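/- Let Ω be either ℝ^n or a cube in ℝ^n with sides parallel to the axes, and let r ≥ 1. For a measurable function f on Ω the following are equivalent: (i) f ∈ 𝓜^r_{A₁}(Ω); (ii) M_Ω(|f|^r) ∈ 𝓜_{A₁}(Ω); (iii) M_Ω f ∈ 𝓜^r_{A₁}(Ω). -/

import Mathlib

open MeasureTheory ENNReal

/-- A (nondegenerate) cube in `ℝⁿ` with sides parallel to the axes. -/
def IsCube {n : ℕ} (Q : Set (Fin n → ℝ)) : Prop :=
  ∃ (a : Fin n → ℝ) (l : ℝ), 0 < l ∧
    Q = Set.univ.pi fun i => Set.Icc (a i) (a i + l)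

/-- The domains considered: all of `ℝⁿ` or a cube with sides parallel to the axes. -/
def IsAdmissibleDomain {n : ℕ} (Ω : Set (Fin n → ℝ)) : Prop :=
  Ω = Set.univ ∨ IsCube Ω

/-- The Hardy–Littlewood maximal operator restricted to `Ω`:
`M_Ω f (x) = sup { (1/|Q|) ∫_Q |f| : Q ⊆ Ω a cube with x ∈ Q }`. -/
noncomputable def maximal {n : ℕ} (Ω : Set (Fin n → ℝ)) (f : (Fin n → ℝ) → ℝ)
    (x : Fin n → ℝ) : ℝ≥0∞ :=
  ⨆ (Q : Set (Fin n → ℝ)) (_ : IsCube Q) (_ : Q ⊆ Ω) (_ : x ∈ Q),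
    (volume Q)⁻¹ * ∫⁻ y in Q, ENNReal.ofReal |f y|

/-- A weight on `Ω`: a measurable function, positive a.e. on `Ω`, integrable on every
cube contained in `Ω` (hence locally integrable; integrable when `Ω` is itself a cube). -/
structure IsWeight {n : ℕ} (Ω : Set (Fin n → ℝ)) (w : (Fin n → ℝ) → ℝ) : Prop where
  measurable : Measurable w
  pos : ∀ᵐ x ∂(volume.restrict Ω), 0 < w x
  locInt : ∀ Q : Set (Fin n → ℝ), IsCube Q → Q ⊆ Ω → IntegrableOn w Q

/-- The Muckenhoupt `A₁(Ω)` class: `M_Ω w ≤ C w` a.e. on `Ω`. -/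
def MemA1 {n : ℕ} (Ω : Set (Fin n → ℝ)) (w : (Fin n → ℝ) → ℝ) : Prop :=
  IsWeight Ω w ∧ ∃ C : ℝ, ∀ᵐ x ∂(volume.restrict Ω),
    maximal Ω w x ≤ ENNReal.ofReal (C * w x)

/-- The Muckenhoupt `A_p(Ω)` class for `1 < p < ∞`:
`sup_{Q ⊆ Ω} (avg_Q w) * (avg_Q w^(1-p'))^(p-1) < ∞` where `p' = p/(p-1)`. -/
def MemApGT1 {n : ℕ} (Ω : Set (Fin n → ℝ)) (p : ℝ) (w : (Fin n → ℝ) → ℝ) : Prop :=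
  IsWeight Ω w ∧ ∃ C : ℝ≥0∞, C ≠ ∞ ∧ ∀ Q : Set (Fin n → ℝ), IsCube Q → Q ⊆ Ω →
    ((volume Q)⁻¹ * ∫⁻ x in Q, ENNReal.ofReal (w x)) *
      ((volume Q)⁻¹ * ∫⁻ x in Q, ENNReal.ofReal (w x ^ (1 - p / (p - 1)))) ^ (p - 1) ≤ C

/-- The Muckenhoupt `A_p(Ω)` class for `1 ≤ p < ∞`. -/
def MemA {n : ℕ} (Ω : Set (Fin n → ℝ)) (p : ℝ) (w : (Fin n → ℝ) → ℝ) : Prop :=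
  (p = 1 ∧ MemA1 Ω w) ∨ (1 < p ∧ MemApGT1 Ω p w)

/-- The Muckenhoupt `A_∞(Ω)` class: the union of `A_p(Ω)` over `1 ≤ p < ∞`. -/
def MemAInf {n : ℕ} (Ω : Set (Fin n → ℝ)) (w : (Fin n → ℝ) → ℝ) : Prop :=
  ∃ p : ℝ, 1 ≤ p ∧ MemA Ω p w

/-- Membership in the weighted Lebesgue space `L^p_w(Ω)`: `f` measurable with
`∫_Ω |f|^p w < ∞`. -/
def MemLw {n : ℕ} (Ω : Set (Fin n → ℝ)) (p : ℝ) (w f : (Fin n → ℝ) → ℝ) : Prop :=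
  Measurable f ∧
    ∫⁻ x in Ω, ENNReal.ofReal |f x| ^ p * ENNReal.ofReal (w x) < ⊤

/-- Membership in the (unweighted) Lebesgue space `L^p(Ω)`. -/
def MemLeb {n : ℕ} (Ω : Set (Fin n → ℝ)) (p : ℝ) (f : (Fin n → ℝ) → ℝ) : Prop :=
  MemLw Ω p (fun _ => 1) f

/-- `f ∈ 𝓜_{A_p}(Ω)`: `f` is measurable and `|f| ≤ w` a.e. on `Ω` for some `w ∈ A_p(Ω)`. -/
def HasApMajorant {n : ℕ} (Ω : Set (Fin n → ℝ)) (p : ℝ) (f : (Fin n → ℝ) → ℝ) : Prop :=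
  Measurable f ∧ ∃ w, MemA Ω p w ∧ ∀ᵐ x ∂(volume.restrict Ω), |f x| ≤ w x

/-- `f ∈ 𝓜^r_{A_p}(Ω)`: `f` is measurable and `|f|^r ≤ w` a.e. on `Ω` for some
`w ∈ A_p(Ω)`. -/
def HasApPowMajorant {n : ℕ} (Ω : Set (Fin n → ℝ)) (p r : ℝ) (f : (Fin n → ℝ) → ℝ) : Prop :=
  Measurable f ∧ ∃ w, MemA Ω p w ∧ ∀ᵐ x ∂(volume.restrict Ω), |f x| ^ r ≤ w x

/-- `f ∈ 𝓜_{A_∞}(Ω)`: `f` is measurable and `|f| ≤ w` a.e. on `Ω` for some `w ∈ A_∞(Ω)`. -/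
def HasAInfMajorant {n : ℕ} (Ω : Set (Fin n → ℝ)) (f : (Fin n → ℝ) → ℝ) : Prop :=
  Measurable f ∧ ∃ w, MemAInf Ω w ∧ ∀ᵐ x ∂(volume.restrict Ω), |f x| ≤ w x

/-- Membership in weak `L^p(ℝⁿ)`: `sup_{t>0} t · |{|f| > t}|^{1/p} < ∞`. -/
def MemWeakLp {n : ℕ} (p : ℝ) (f : (Fin n → ℝ) → ℝ) : Prop :=
  Measurable f ∧ ∃ C : ℝ≥0∞, C ≠ ⊤ ∧ ∀ t : ℝ, 0 < t →
    ENNReal.ofReal t * volume {x | t < |f x|} ^ (1 / p) ≤ C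


section Aux

open Metric Filter Topology

variable {n : ℕ}

lemma isCube_closedBall (x : Fin n → ℝ) {s : ℝ} (hs : 0 < s) :
    IsCube (Metric.closedBall x s) := by
  refine ⟨fun i => x i - s, 2 * s, by linarith, ?_⟩
  have h : ∀ i : Fin n, x i - s + 2 * s = x i + s := fun i => by ring
  rw [closedBall_pi x hs.le]
  simp [Real.closedBall_eq_Icc, h]

lemma IsCube.volume_eq {Q : Set (Fin n → ℝ)} (hQ : IsCube Q) :
    ∃ l : ℝ, 0 < l ∧ volume Q = ENNReal.ofReal l ^ n := by
  obtain ⟨a, l, hl, rfl⟩ := hQ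
  exact ⟨l, hl, by rw [volume_pi_pi]; simp [Real.volume_Icc]⟩

lemma IsCube.vol_pos {Q : Set (Fin n → ℝ)} (hQ : IsCube Q) : volume Q ≠ 0 := by
  obtain ⟨l, hl, h⟩ := hQ.volume_eq
  rw [h]
  exact pow_ne_zero n (ENNReal.ofReal_pos.2 hl).ne'

lemma IsCube.vol_ne_top {Q : Set (Fin n → ℝ)} (hQ : IsCube Q) : volume Q ≠ ⊤ := by
  obtain ⟨l, hl, h⟩ := hQ.volume_eq
  rw [h]
  exact ENNReal.pow_ne_top ENNReal.ofReal_ne_top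

lemma le_maximal {Ω Q : Set (Fin n → ℝ)} {f : (Fin n → ℝ) → ℝ} {x : Fin n → ℝ}
    (hQ : IsCube Q) (hsub : Q ⊆ Ω) (hx : x ∈ Q) :
    (volume Q)⁻¹ * ∫⁻ y in Q, ENNReal.ofReal |f y| ≤ maximal Ω f x :=
  le_iSup_of_le Q <| le_iSup_of_le hQ <| le_iSup_of_le hsub <| le_iSup_of_le hx le_rfl

lemma maximal_le {Ω : Set (Fin n → ℝ)} {f : (Fin n → ℝ) → ℝ} {x : Fin n → ℝ} {c : ℝ≥0∞}
    (h : ∀ Q, IsCube Q → Q ⊆ Ω → x ∈ Q →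
      (volume Q)⁻¹ * ∫⁻ y in Q, ENNReal.ofReal |f y| ≤ c) :
    maximal Ω f x ≤ c :=
  iSup_le fun Q => iSup_le fun h1 => iSup_le fun h2 => iSup_le fun h3 => h Q h1 h2 h3

lemma maximal_mono_ae {Ω : Set (Fin n → ℝ)} {g h : (Fin n → ℝ) → ℝ}
    (hle : ∀ᵐ y ∂(volume.restrict Ω), ENNReal.ofReal |g y| ≤ ENNReal.ofReal |h y|)
    (x : Fin n → ℝ) : maximal Ω g x ≤ maximal Ω h x := by
  refine maximal_le fun Q h1 h2 h3 => le_trans ?_ (le_maximal h1 h2 h3)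
  exact mul_le_mul_right (lintegral_mono_ae (ae_restrict_of_ae_restrict_of_subset h2 hle)) _

lemma maximal_const_mul_le {Ω : Set (Fin n → ℝ)} {w : (Fin n → ℝ) → ℝ} {c : ℝ} (hc : 0 ≤ c)
    (x : Fin n → ℝ) :
    maximal Ω (fun y => c * w y) x ≤ ENNReal.ofReal c * maximal Ω w x := by
  refine maximal_le fun Q h1 h2 h3 => ?_
  have he : ∀ y : Fin n → ℝ,
      ENNReal.ofReal |c * w y| = ENNReal.ofReal c * ENNReal.ofReal |w y| := by
    intro y
    rw [abs_mul, abs_of_nonneg hc, ENNReal.ofReal_mul hc]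
  simp only [he]
  rw [lintegral_const_mul' _ _ ENNReal.ofReal_ne_top, ← mul_assoc, mul_comm ((volume Q)⁻¹),
    mul_assoc]
  exact mul_le_mul_right (le_maximal h1 h2 h3) _

lemma avg_rpow {Q : Set (Fin n → ℝ)} (hQ : IsCube Q) {g : (Fin n → ℝ) → ℝ≥0∞}
    (hg : AEMeasurable g (volume.restrict Q)) {r : ℝ} (hr : 1 ≤ r) :
    ((volume Q)⁻¹ * ∫⁻ y in Q, g y) ^ r ≤ (volume Q)⁻¹ * ∫⁻ y in Q, g y ^ r := by
  rcases eq_or_lt_of_le hr with h1 | h1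
  · rw [← h1]
    simp
  have hr0 : (0:ℝ) < r := lt_trans one_pos h1
  have hV0 : volume Q ≠ 0 := hQ.vol_pos
  have hVt : volume Q ≠ ⊤ := hQ.vol_ne_top
  set q := Real.conjExponent r with hqdef
  have hpq : r.HolderConjugate q := Real.HolderConjugate.conjExponent h1
  have holder := ENNReal.lintegral_mul_le_Lp_mul_Lq (volume.restrict Q) hpq hg
    (aemeasurable_const (b := (1:ℝ≥0∞)))
  simp only [Pi.mul_apply, mul_one, ENNReal.one_rpow, lintegral_one,
    Measure.restrict_apply_univ] at holder
  have h1q : 1 / q * r = r - 1 := by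
    have hq : q = r / (r - 1) := rfl
    have h2 : r - 1 ≠ 0 := sub_ne_zero.2 (ne_of_gt h1)
    rw [hq]
    field_simp
  calc ((volume Q)⁻¹ * ∫⁻ y in Q, g y) ^ r
      ≤ ((volume Q)⁻¹ * ((∫⁻ y in Q, g y ^ r) ^ (1 / r) * volume Q ^ (1 / q))) ^ r := by
        gcongr
    _ = (volume Q ^ r)⁻¹ * ((∫⁻ y in Q, g y ^ r) * volume Q ^ (r - 1)) := by
        rw [ENNReal.mul_rpow_of_nonneg _ _ hr0.le, ENNReal.mul_rpow_of_nonneg _ _ hr0.le,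
          ENNReal.inv_rpow, ← ENNReal.rpow_mul, ← ENNReal.rpow_mul,
          one_div_mul_cancel hr0.ne', ENNReal.rpow_one, h1q]
    _ = (volume Q)⁻¹ * ∫⁻ y in Q, g y ^ r := by
        rw [← ENNReal.rpow_neg, mul_comm (∫⁻ y in Q, g y ^ r), ← mul_assoc,
          ← ENNReal.rpow_add _ _ hV0 hVt]
        have he : -r + (r - 1) = -1 := by ring
        rw [he, ENNReal.rpow_neg_one]

lemma maximal_rpow_le {Ω : Set (Fin n → ℝ)} {f : (Fin n → ℝ) → ℝ} (hf : Measurable f)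
    {r : ℝ} (hr : 1 ≤ r) (x : Fin n → ℝ) :
    (maximal Ω f x) ^ r ≤ maximal Ω (fun y => |f y| ^ r) x := by
  have hr0 : (0:ℝ) < r := lt_of_lt_of_le one_pos hr
  have key : maximal Ω f x ≤ (maximal Ω (fun y => |f y| ^ r) x) ^ r⁻¹ := by
    refine maximal_le fun Q h1 h2 h3 => ?_
    have hint : (∫⁻ y in Q, ENNReal.ofReal |f y| ^ r) = ∫⁻ y in Q, ENNReal.ofReal (abs (|f y| ^ r)) := by
      refine lintegral_congr fun y => ?_
      rw [abs_of_nonneg (Real.rpow_nonneg (abs_nonneg _) r),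
        ENNReal.ofReal_rpow_of_nonneg (abs_nonneg _) hr0.le]
    have hgm : Measurable fun y : Fin n → ℝ => ENNReal.ofReal |f y| :=
      measurable_ofReal.comp hf.abs
    have jensen : ((volume Q)⁻¹ * ∫⁻ y in Q, ENNReal.ofReal |f y|) ^ r
        ≤ (volume Q)⁻¹ * ∫⁻ y in Q, ENNReal.ofReal |f y| ^ r :=
      avg_rpow h1 hgm.aemeasurable hr
    have hle : ((volume Q)⁻¹ * ∫⁻ y in Q, ENNReal.ofReal |f y|) ^ r
        ≤ maximal Ω (fun y => |f y| ^ r) x := by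
      refine jensen.trans ?_
      rw [hint]
      exact le_maximal h1 h2 h3
    calc (volume Q)⁻¹ * ∫⁻ y in Q, ENNReal.ofReal |f y|
        = (((volume Q)⁻¹ * ∫⁻ y in Q, ENNReal.ofReal |f y|) ^ r) ^ r⁻¹ := by
          rw [← ENNReal.rpow_mul, mul_inv_cancel₀ hr0.ne', ENNReal.rpow_one]
      _ ≤ (maximal Ω (fun y => |f y| ^ r) x) ^ r⁻¹ :=
          ENNReal.rpow_le_rpow hle (by positivity)
  calc (maximal Ω f x) ^ r ≤ ((maximal Ω (fun y => |f y| ^ r) x) ^ r⁻¹) ^ r :=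
      ENNReal.rpow_le_rpow key hr0.le
    _ = maximal Ω (fun y => |f y| ^ r) x := by
      rw [← ENNReal.rpow_mul, inv_mul_cancel₀ hr0.ne', ENNReal.rpow_one]

lemma ae_eventually_closedBall_subset {Ω : Set (Fin n → ℝ)} (hΩ : IsAdmissibleDomain Ω) :
    ∀ᵐ x ∂(volume.restrict Ω), ∀ᶠ s in nhdsWithin (0:ℝ) (Set.Ioi 0),
      Metric.closedBall x s ⊆ Ω := by
  rcases hΩ with rfl | ⟨a, l, hl, rfl⟩
  · exact Filter.Eventually.of_forall fun x => Filter.Eventually.of_forall fun s =>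
      Set.subset_univ _
  · set Q := Set.univ.pi fun i => Set.Icc (a i) (a i + l) with hQdef
    set O := Set.univ.pi fun i => Set.Ioo (a i) (a i + l) with hOdef
    have hOopen : IsOpen O := isOpen_set_pi Set.finite_univ fun i _ => isOpen_Ioo
    have hsub : O ⊆ Q := Set.pi_mono fun i _ => Set.Ioo_subset_Icc_self
    have hvQ : volume Q = ENNReal.ofReal l ^ n := by
      rw [hQdef, volume_pi_pi]; simp [Real.volume_Icc]
    have hvO : volume O = ENNReal.ofReal l ^ n := by
      rw [hOdef, volume_pi_pi]; simp [Real.volume_Ioo]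
    have hfin : volume O ≠ ⊤ := by
      rw [hvO]; exact ENNReal.pow_ne_top ENNReal.ofReal_ne_top
    have hvol : volume (Q \ O) = 0 := by
      rw [measure_diff hsub hOopen.measurableSet.nullMeasurableSet hfin, hvQ, hvO, tsub_self]
    have hQmeas : MeasurableSet Q := MeasurableSet.univ_pi fun i => measurableSet_Icc
    have h0 : (volume.restrict Q) (Q \ O) = 0 := by
      rw [Measure.restrict_apply (hQmeas.diff hOopen.measurableSet)]
      exact measure_mono_null Set.inter_subset_left hvol
    have hmem : ∀ᵐ x ∂(volume.restrict Q), x ∈ O := by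
      filter_upwards [ae_restrict_mem hQmeas, measure_eq_zero_iff_ae_notMem.1 h0] with x h1 h2
      by_contra h3
      exact h2 ⟨h1, h3⟩
    filter_upwards [hmem] with x hx
    obtain ⟨ε, hε, hball⟩ := Metric.isOpen_iff.1 hOopen x hx
    filter_upwards [Ioo_mem_nhdsGT_of_mem ⟨le_rfl, hε⟩] with s hs
    exact (Metric.closedBall_subset_ball hs.2).trans (hball.trans hsub)

lemma ae_le_maximal {Ω : Set (Fin n → ℝ)} (hΩ : IsAdmissibleDomain Ω)
    {f : (Fin n → ℝ) → ℝ} (hf : Measurable f) :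
    ∀ᵐ x ∂(volume.restrict Ω), ENNReal.ofReal |f x| ≤ maximal Ω f x := by
  set G : ℕ → (Fin n → ℝ) → ℝ≥0∞ := fun k y =>
    (Metric.closedBall (0 : Fin n → ℝ) (k : ℝ)).indicator
      (fun y => min (ENNReal.ofReal |f y|) (k : ℝ≥0∞)) y with hG
  have hGmeas : ∀ k, Measurable (G k) := fun k =>
    ((measurable_ofReal.comp hf.abs).min measurable_const).indicator measurableSet_closedBall
  have hGle : ∀ k y, G k y ≤ ENNReal.ofReal |f y| := fun k y =>
    le_trans (Set.indicator_le_self _ _ y) (min_le_left _ _)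
  have hGtop : ∀ k : ℕ, (∫⁻ y, G k y) ≠ ⊤ := by
    intro k
    have hb : (∫⁻ y, G k y) ≤
        (k : ℝ≥0∞) * volume (Metric.closedBall (0 : Fin n → ℝ) (k : ℝ)) := by
      rw [hG]
      rw [lintegral_indicator measurableSet_closedBall]
      calc (∫⁻ y in Metric.closedBall (0 : Fin n → ℝ) (k : ℝ),
              min (ENNReal.ofReal |f y|) (k : ℝ≥0∞))
          ≤ ∫⁻ _ in Metric.closedBall (0 : Fin n → ℝ) (k : ℝ), (k : ℝ≥0∞) :=
            lintegral_mono fun y => min_le_right _ _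
        _ = (k : ℝ≥0∞) * volume (Metric.closedBall (0 : Fin n → ℝ) (k : ℝ)) := by
            rw [setLIntegral_const]
    exact ne_top_of_le_ne_top
      (ENNReal.mul_ne_top (ENNReal.natCast_ne_top k) measure_closedBall_lt_top.ne) hb
  have key : ∀ k : ℕ, ∀ᵐ x ∂(volume.restrict Ω), G k x ≤ maximal Ω f x := by
    intro k
    have bes := (Besicovitch.vitaliFamily (volume : Measure (Fin n → ℝ))).ae_tendsto_lintegral_div
      (hGmeas k).aemeasurable (hGtop k)
    filter_upwards [ae_restrict_of_ae bes, ae_eventually_closedBall_subset hΩ] with x hx hball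
    have hx2 : Filter.Tendsto
        (fun s : ℝ => (∫⁻ y in Metric.closedBall x s, G k y) / volume (Metric.closedBall x s))
        (nhdsWithin 0 (Set.Ioi 0)) (nhds (G k x)) :=
      hx.comp (Besicovitch.tendsto_filterAt _ x)
    refine le_of_tendsto hx2 ?_
    filter_upwards [hball, self_mem_nhdsWithin] with s hsub hs
    have hs0 : (0:ℝ) < s := hs
    calc (∫⁻ y in Metric.closedBall x s, G k y) / volume (Metric.closedBall x s)
        = (volume (Metric.closedBall x s))⁻¹ * ∫⁻ y in Metric.closedBall x s, G k y := by
          rw [ENNReal.div_eq_inv_mul]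
      _ ≤ (volume (Metric.closedBall x s))⁻¹ *
            ∫⁻ y in Metric.closedBall x s, ENNReal.ofReal |f y| :=
          mul_le_mul_right (lintegral_mono fun y => hGle k y) _
      _ ≤ maximal Ω f x :=
          le_maximal (isCube_closedBall x hs0) hsub (Metric.mem_closedBall_self hs0.le)
  filter_upwards [ae_all_iff.2 key] with x hx
  set k : ℕ := ⌈max ‖x‖ |f x|⌉₊ with hk
  have h1 : ENNReal.ofReal |f x| ≤ (k : ℝ≥0∞) := by
    rw [← ENNReal.ofReal_natCast]
    exact ENNReal.ofReal_le_ofReal ((le_max_right _ _).trans (Nat.le_ceil _))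
  have h2 : x ∈ Metric.closedBall (0 : Fin n → ℝ) (k : ℝ) := by
    rw [Metric.mem_closedBall, dist_zero_right]
    exact (le_max_left _ _).trans (Nat.le_ceil _)
  have hGx : G k x = ENNReal.ofReal |f x| := by
    simp only [hG]
    rw [Set.indicator_of_mem h2, min_eq_left h1]
  rw [← hGx]
  exact hx k

lemma MemA1.const_mul {Ω : Set (Fin n → ℝ)} {w : (Fin n → ℝ) → ℝ} (hw : MemA1 Ω w)
    {c : ℝ} (hc : 0 < c) : MemA1 Ω (fun y => c * w y) := by
  obtain ⟨⟨hmeas, hpos, hint⟩, C, hC⟩ := hw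
  refine ⟨⟨measurable_const.mul hmeas, ?_, fun Q hQ hsub => (hint Q hQ hsub).const_mul c⟩, C, ?_⟩
  · filter_upwards [hpos] with x hx
    exact mul_pos hc hx
  · filter_upwards [hC] with x hx
    calc maximal Ω (fun y => c * w y) x ≤ ENNReal.ofReal c * maximal Ω w x :=
        maximal_const_mul_le hc.le x
      _ ≤ ENNReal.ofReal c * ENNReal.ofReal (C * w x) := mul_le_mul_right hx _
      _ = ENNReal.ofReal (C * (c * w x)) := by
          rw [← ENNReal.ofReal_mul hc.le]
          congr 1
          ring

lemma memA_one_iff {Ω : Set (Fin n → ℝ)} {w : (Fin n → ℝ) → ℝ} :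
    MemA Ω 1 w ↔ MemA1 Ω w := by
  constructor
  · rintro (⟨-, h⟩ | ⟨h, -⟩)
    · exact h
    · exact absurd h (lt_irrefl 1)
  · exact fun h => Or.inl ⟨rfl, h⟩

lemma forward_bound {Ω : Set (Fin n → ℝ)} {r : ℝ}
    {f w : (Fin n → ℝ) → ℝ} (hw : MemA1 Ω w)
    (hmaj : ∀ᵐ x ∂(volume.restrict Ω), |f x| ^ r ≤ w x) :
    ∃ w', MemA1 Ω w' ∧ ∀ᵐ x ∂(volume.restrict Ω),
      maximal Ω (fun y => |f y| ^ r) x ≤ ENNReal.ofReal (w' x) := by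
  have hw1 := hw.1
  obtain ⟨C, hC⟩ := hw.2
  set c := max C 1 with hcdef
  have hc0 : (0:ℝ) < c := lt_of_lt_of_le one_pos (le_max_right _ _)
  refine ⟨fun y => c * w y, hw.const_mul hc0, ?_⟩
  have hmono : ∀ x, maximal Ω (fun y => |f y| ^ r) x ≤ maximal Ω w x := by
    refine maximal_mono_ae ?_
    filter_upwards [hmaj] with y h1
    refine ENNReal.ofReal_le_ofReal ?_
    rw [abs_of_nonneg (Real.rpow_nonneg (abs_nonneg _) r)]
    exact h1.trans (le_abs_self _)
  filter_upwards [hC, hw1.pos] with x h1 h2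
  exact ((hmono x).trans h1).trans (ENNReal.ofReal_le_ofReal
    (mul_le_mul_of_nonneg_right (le_max_left _ _) h2.le))

end Aux

theorem stmt17 (n : ℕ) (Ω : Set (Fin n → ℝ)) (hΩ : IsAdmissibleDomain Ω)
    (r : ℝ) (hr : 1 ≤ r) (f : (Fin n → ℝ) → ℝ) (hf : Measurable f) :
    (HasApPowMajorant Ω 1 r f ↔
      ∃ w, MemA1 Ω w ∧ ∀ᵐ x ∂(volume.restrict Ω),
        maximal Ω (fun y => |f y| ^ r) x ≤ ENNReal.ofReal (w x)) ∧
    (HasApPowMajorant Ω 1 r f ↔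
      ∃ w, MemA1 Ω w ∧ ∀ᵐ x ∂(volume.restrict Ω),
        (maximal Ω f x) ^ r ≤ ENNReal.ofReal (w x)) := by
  have habs : ∀ y : Fin n → ℝ, abs (|f y| ^ r) = |f y| ^ r := fun y =>
    abs_of_nonneg (Real.rpow_nonneg (abs_nonneg _) r)
  have hr0 : (0:ℝ) < r := lt_of_lt_of_le one_pos hr
  have hmeasr : Measurable fun y => |f y| ^ r :=
    (Real.continuous_rpow_const hr0.le).measurable.comp hf.abs
  constructor
  · constructor
    · rintro ⟨-, w, hwA, hmaj⟩
      exact forward_bound (memA_one_iff.1 hwA) hmaj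
    · rintro ⟨w, hw, hb⟩
      refine ⟨hf, w, memA_one_iff.2 hw, ?_⟩
      filter_upwards [ae_le_maximal hΩ hmeasr, hb, hw.1.pos] with x h1 h2 h3
      have hle : ENNReal.ofReal (|f x| ^ r) ≤ ENNReal.ofReal (w x) := by
        calc ENNReal.ofReal (|f x| ^ r) = ENNReal.ofReal (abs (|f x| ^ r)) := by rw [habs x]
          _ ≤ maximal Ω (fun y => |f y| ^ r) x := h1
          _ ≤ ENNReal.ofReal (w x) := h2
      exact (ENNReal.ofReal_le_ofReal_iff h3.le).1 hle
  · constructor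
    · rintro ⟨-, w, hwA, hmaj⟩
      obtain ⟨w', hw', hb'⟩ := forward_bound (memA_one_iff.1 hwA) hmaj
      refine ⟨w', hw', ?_⟩
      filter_upwards [hb'] with x hx
      exact (maximal_rpow_le hf hr x).trans hx
    · rintro ⟨w, hw, hb⟩
      refine ⟨hf, w, memA_one_iff.2 hw, ?_⟩
      filter_upwards [ae_le_maximal hΩ hf, hb, hw.1.pos] with x h1 h2 h3
      have hle : ENNReal.ofReal (|f x| ^ r) ≤ ENNReal.ofReal (w x) := by
        rw [← ENNReal.ofReal_rpow_of_nonneg (abs_nonneg _) hr0.le]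
        calc (ENNReal.ofReal |f x|) ^ r ≤ (maximal Ω f x) ^ r :=
            ENNReal.rpow_le_rpow h1 hr0.le
          _ ≤ ENNReal.ofReal (w x) := h2
      exact (ENNReal.ofReal_le_ofReal_iff h3.le).1 hle
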